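/- Let T be a rooted tree for which the iterated derivative ∂_K^γ(T) is empty for some ordinal γ, where ∂_K^{α+1}(T) removes from ∂_K^α(T) all nodes t such that every node of ∂_K^α(T) above t has only finitely many successors in ∂_K^α(T) (taking intersections at limits). Then every nonempty closed subset X of R(T) contains a point x having a neighborhood in X that is compact. -/

import Mathlib

open Set Topology

/-- An order-theoretic tree: every set of predecessors is a well-ordered chain. -/
def IsOrderTree (T : Type*) [PartialOrder T] : Prop :=
  ∀ t : T, (Set.Iio t).IsWF ∧ IsChain (· ≤ ·) (Set.Iio t)

/-- A ray: a nonempty, downward closed chain with no maximal element. -/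
def IsRay {T : Type*} [PartialOrder T] (R : Set T) : Prop :=
  R.Nonempty ∧ IsChain (· ≤ ·) R ∧ (∀ x ∈ R, ∀ y, y ≤ x → y ∈ R) ∧
    ∀ x ∈ R, ∃ y ∈ R, x < y

/-- The ray space of a tree. -/
def RaySpace (T : Type*) [PartialOrder T] := {R : Set T // IsRay R}

/-- The topology on the ray space, inherited from the product topology on `2^T`:
subbasic open sets are `[t] = {R : t ∈ R}` and their complements. -/
instance {T : Type*} [PartialOrder T] : TopologicalSpace (RaySpace T) :=
  TopologicalSpace.generateFrom
    {U | ∃ t : T, U = {R : RaySpace T | t ∈ R.val} ∨ U = {R : RaySpace T | t ∉ R.val}}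

/-- The immediate successors of `s` within a subtree `S ⊆ T`. -/
def SuccIn {T : Type*} [PartialOrder T] (S : Set T) (s : T) : Set T :=
  {u | u ∈ S ∧ s < u ∧ ∀ w ∈ S, s < w → ¬ w < u}

/-- A node `t` is `S`-compactly trivial if every node of `S` above `t` has only finitely
many immediate successors in `S`. -/
def CompactlyTrivialIn {T : Type*} [PartialOrder T] (S : Set T) (t : T) : Prop :=
  ∀ s ∈ S, t ≤ s → (SuccIn S s).Finite

/-- The iterated derivative `∂_K^α(T)`: at successor stages remove all compactly trivial
nodes, at limit stages take intersections. -/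
noncomputable def derivK (T : Type*) [PartialOrder T] : Ordinal → Set T := fun o =>
  Ordinal.limitRecOn o Set.univ
    (fun _ S => {t ∈ S | ¬ CompactlyTrivialIn S t})
    (fun o _ IH => ⋂ o' : Set.Iio o, IH o'.1 o'.2)

/-!
Let `α` be least such that some node of some ray of `X` lies outside `∂_K^α(T)`. Since
`∂_K^0(T) = T` and limit stages are intersections, `α = β + 1`: every ray of `X` lies in
`D = ∂_K^β(T)`, and some node `t` of a ray `x ∈ X` is compactly trivial in `D`. Coding rays by
their characteristic functions in `2^T`, the rays through `t` inside `D` form a closed, hence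
compact, set, because finite branching of `D` above `t` makes "has an immediate successor in `D`"
a closed condition. So `[t] ∩ X`, a closed subset of it, is a compact neighbourhood of `x` in `X`.
-/

lemma isClopen_setOf_apply_eq {ι X : Type*} [TopologicalSpace X] [DiscreteTopology X] (i : ι)
    (x : X) : IsClopen {f : ι → X | f i = x} :=
  (isClopen_discrete {x}).preimage (continuous_apply i)

section

variable {T : Type*} [PartialOrder T]

lemma IsOrderTree.exists_succIn_le (htree : IsOrderTree T) {S : Set T} {a b : T}
    (hb : b ∈ S) (hab : a < b) : ∃ u ∈ SuccIn S a, u ≤ b := by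
  have hwf : (S ∩ Ioc a b).IsWF := ((htree b).1.insert b).mono <| by
    rw [Iio_insert]
    exact inter_subset_right.trans Ioc_subset_Iic_self
  have hne : (S ∩ Ioc a b).Nonempty := ⟨b, hb, hab, le_rfl⟩
  obtain ⟨huS, hau, hub⟩ := hwf.min_mem hne
  exact ⟨hwf.min hne, ⟨huS, hau, fun w hwS haw hwu =>
    hwf.not_lt_min hne ⟨hwS, haw, hwu.le.trans hub⟩ hwu⟩, hub⟩

lemma IsRay.exists_succIn_mem (htree : IsOrderTree T) {R S : Set T} (hR : IsRay R)
    (hRS : R ⊆ S) {a : T} (ha : a ∈ R) : ∃ u ∈ SuccIn S a, u ∈ R := by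
  obtain ⟨b, hbR, hab⟩ := hR.2.2.2 a ha
  obtain ⟨u, hu, hub⟩ := htree.exists_succIn_le (hRS hbR) hab
  exact ⟨u, hu, hR.2.2.1 b hbR u hub⟩

namespace RaySpace

lemma isOpen_setOf_mem (t : T) : IsOpen {R : RaySpace T | t ∈ R.val} :=
  TopologicalSpace.isOpen_generateFrom_of_mem ⟨t, Or.inl rfl⟩

lemma isOpen_setOf_notMem (t : T) : IsOpen {R : RaySpace T | t ∉ R.val} :=
  TopologicalSpace.isOpen_generateFrom_of_mem ⟨t, Or.inr rfl⟩

lemma isClosed_setOf_mem (t : T) : IsClosed {R : RaySpace T | t ∈ R.val} :=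
  ⟨isOpen_setOf_notMem t⟩

open Classical in
noncomputable def charFun (R : RaySpace T) : T → Bool := fun s => decide (s ∈ R.val)

@[simp]
lemma charFun_eq_true {R : RaySpace T} {s : T} : R.charFun s = true ↔ s ∈ R.val := by
  simp [charFun]

lemma isInducing_charFun : IsInducing (charFun (T := T)) := by
  refine ⟨le_antisymm ?_ (le_generateFrom ?_)⟩
  · refine continuous_iff_le_induced.mp (continuous_pi fun s => continuous_discrete_rng.mpr ?_)
    rintro (_ | _)
    · simpa [Set.preimage, charFun] using isOpen_setOf_notMem s
    · simpa [Set.preimage] using isOpen_setOf_mem s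
  · rintro U ⟨s, rfl | rfl⟩
    · convert isOpen_induced (isClopen_setOf_apply_eq s true).isOpen
      ext; simp
    · convert isOpen_induced (isClopen_setOf_apply_eq s false).isOpen
      ext; simp [charFun]

/-- Characteristic functions of rays through `t` inside `S`, with "no maximal element" replaced
by a condition that is closed in `T → Bool` when `S` is compactly trivial above `t`. -/
def rayCodes (S : Set T) (t : T) : Set (T → Bool) :=
  {f | f t = true ∧ (∀ s, f s = true → s ∈ S) ∧
    (∀ a b, f a = true → f b = true → a ≤ b ∨ b ≤ a) ∧
    (∀ a b, b ≤ a → f a = true → f b = true) ∧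
    ∀ a, a ∈ S → t ≤ a → f a = true → ∃ u ∈ SuccIn S a, f u = true}

lemma isClosed_rayCodes {S : Set T} {t : T} (hS : CompactlyTrivialIn S t) :
    IsClosed (rayCodes S t) := by
  have hclosed (s : T) (b : Bool) : IsClosed {f : T → Bool | f s = b} :=
    (isClopen_setOf_apply_eq s b).isClosed
  have hopen (s : T) (b : Bool) : IsOpen {f : T → Bool | f s = b} :=
    (isClopen_setOf_apply_eq s b).isOpen
  have hforall {ι : Type _} {P : ι → (T → Bool) → Prop} (h : ∀ i, IsClosed {f | P i f}) :
      IsClosed {f | ∀ i, P i f} := by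
    simpa only [ofPred_forall] using isClosed_iInter h
  have hsucc (a : T) :
      IsClosed {f : T → Bool | a ∈ S → t ≤ a → f a = true → ∃ u ∈ SuccIn S a, f u = true} := by
    by_cases ha : a ∈ S ∧ t ≤ a
    · refine isClosed_imp isOpen_const (isClosed_imp isOpen_const (isClosed_imp (hopen a true) ?_))
      convert (hS a ha.1 ha.2).isClosed_biUnion fun u _ => hclosed u true
      ext; simp
    · convert isClosed_univ
      aesop
  refine (hclosed t true).inter <| (hforall fun s => ?_).inter <|
    (hforall fun a => hforall fun b => ?_).inter <|
    (hforall fun a => hforall fun b => ?_).inter <| hforall hsucc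
  · exact isClosed_imp (hopen s true) isClosed_const
  · exact isClosed_imp (hopen a true) (isClosed_imp (hopen b true) isClosed_const)
  · exact isClosed_imp isOpen_const (isClosed_imp (hopen a true) (hclosed b true))

lemma charFun_mem_rayCodes_iff (htree : IsOrderTree T) {S : Set T} {t : T} {R : RaySpace T} :
    R.charFun ∈ rayCodes S t ↔ t ∈ R.val ∧ R.val ⊆ S := by
  simp only [rayCodes, mem_ofPred_eq, charFun_eq_true]
  refine ⟨fun h => ⟨h.1, h.2.1⟩, fun ⟨ht, hRS⟩ => ⟨ht, hRS, fun a b ha hb => R.2.2.1.total ha hb,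
    fun a b hba ha => R.2.2.2.1 a ha b hba, fun a _ _ ha => R.2.exists_succIn_mem htree hRS ha⟩⟩

lemma rayCodes_subset_range_charFun {S : Set T} {t : T} : rayCodes S t ⊆ range charFun := by
  rintro f ⟨ht, hS, hchain, hdown, hsucc⟩
  have hray : IsRay {s | f s = true} := by
    refine ⟨⟨t, ht⟩, fun a ha b hb _ => hchain a b ha hb, fun a ha b hba => hdown a b hba ha,
      fun a ha => ?_⟩
    by_cases hta : t ≤ a
    · obtain ⟨u, hu, hfu⟩ := hsucc a (hS a ha) hta ha
      exact ⟨u, hfu, hu.2.1⟩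
    · exact ⟨t, ht, lt_of_le_not_ge ((hchain a t ha ht).resolve_right hta) hta⟩
  exact ⟨⟨_, hray⟩, funext fun s => Bool.eq_iff_iff.mpr charFun_eq_true⟩

lemma isCompact_setOf_mem_subset (htree : IsOrderTree T) {S : Set T} {t : T}
    (hS : CompactlyTrivialIn S t) : IsCompact {R : RaySpace T | t ∈ R.val ∧ R.val ⊆ S} := by
  have hpre : {R : RaySpace T | t ∈ R.val ∧ R.val ⊆ S} = charFun ⁻¹' rayCodes S t :=
    ext fun R => (charFun_mem_rayCodes_iff htree).symm
  rw [hpre]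
  exact isInducing_charFun.isCompact_preimage' (isClosed_rayCodes hS).isCompact
    rayCodes_subset_range_charFun

end RaySpace

section derivK

universe u

variable (T)

lemma derivK_zero : derivK T 0 = univ := by
  simp [derivK]

lemma derivK_add_one (o : Ordinal) :
    derivK T (o + 1) = {t ∈ derivK T o | ¬ CompactlyTrivialIn (derivK T o) t} := by
  simp [derivK]

lemma derivK_of_isSuccLimit {o : Ordinal} (ho : Order.IsSuccLimit o) :
    derivK T o = ⋂ o' : Iio o, derivK T o'.1 := by
  simp [derivK, Ordinal.limitRecOn_limit _ _ _ _ ho]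

variable {T}

lemma exists_compactlyTrivialIn_derivK {A : Set T} {γ : Ordinal.{u}} (hγ : ¬ A ⊆ derivK T γ) :
    ∃ β : Ordinal.{u}, A ⊆ derivK T β ∧ ∃ t ∈ A, CompactlyTrivialIn (derivK T β) t := by
  induction γ using Ordinal.limitRecOn with
  | zero => exact absurd (derivK_zero T ▸ subset_univ A) hγ
  | add_one o ih =>
    by_cases hA : A ⊆ derivK T o
    · obtain ⟨t, htA, ht⟩ := not_subset.mp hγ
      rw [derivK_add_one] at ht
      exact ⟨o, hA, t, htA, not_not.mp fun h => ht ⟨hA htA, h⟩⟩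
    · exact ih hA
  | limit o ho ih =>
    rw [derivK_of_isSuccLimit T ho, subset_iInter_iff, not_forall] at hγ
    obtain ⟨⟨o', ho'⟩, hA⟩ := hγ
    exact ih o' ho' hA

end derivK

end

theorem compact_nbhd_in_closed_of_derivK_empty_general {T : Type*} [PartialOrder T]
    (htree : IsOrderTree T)
    (γ : Ordinal) (hγ : derivK T γ = ∅)
    (X : Set (RaySpace T)) (hX : X.Nonempty) (hXclosed : IsClosed X) :
    ∃ x ∈ X, ∃ U : Set (RaySpace T), x ∈ U ∧ IsOpen U ∧ IsCompact (U ∩ X) := by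
  obtain ⟨x₀, hx₀⟩ := hX
  obtain ⟨s, hs⟩ := x₀.2.1
  have hγ' : ¬ ⋃ x ∈ X, x.val ⊆ derivK T γ := by
    rw [hγ, subset_empty_iff]
    exact nonempty_iff_ne_empty.mp ⟨s, mem_biUnion hx₀ hs⟩
  obtain ⟨β, hXβ, t, htX, ht⟩ := exists_compactlyTrivialIn_derivK hγ'
  obtain ⟨x, hx, htx⟩ := mem_iUnion₂.mp htX
  refine ⟨x, hx, {R | t ∈ R.val}, htx, RaySpace.isOpen_setOf_mem t, ?_⟩
  refine (RaySpace.isCompact_setOf_mem_subset htree ht).of_isClosed_subset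
    ((RaySpace.isClosed_setOf_mem t).inter hXclosed) ?_
  exact fun R hR => ⟨hR.1, fun s hs => hXβ (mem_biUnion hR.2 hs)⟩

/-- If `∂_K^γ(T) = ∅` for some ordinal `γ`, then every nonempty closed subset `X` of the ray
space `R(T)` has a point with a compact neighborhood in `X`. -/
theorem compact_nbhd_in_closed_of_derivK_empty {T : Type*} [PartialOrder T]
    (htree : IsOrderTree T) (r : T) (hroot : ∀ t : T, r ≤ t)
    (γ : Ordinal) (hγ : derivK T γ = ∅)
    (X : Set (RaySpace T)) (hX : X.Nonempty) (hXclosed : IsClosed X) :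
    ∃ x ∈ X, ∃ U : Set (RaySpace T), x ∈ U ∧ IsOpen U ∧ IsCompact (U ∩ X) :=
  compact_nbhd_in_closed_of_derivK_empty_general htree γ hγ X hX hXclosed
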